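/- arXiv:1705.10758 — 5 statements merged into one kernel-verified Lean document; each statement's English description precedes it below -/
import Mathlib

section
/- Let p ≥ 5 be a prime. A Kac tuple (a0,a1,a2) for the root system of type G2 is balanced and nontrivial if and only if (p; a0,a1,a2) is one of the following three: (7; 2,1,1), (13; 6,1,2), (13; 1,2,3). (Equivalently: these Kac coordinates represent exactly the G-conjugacy classes of nonzero balanced toral elements of a simple Lie algebra of type G2 over an algebraically closed field of good characteristic p ≥ 5.) -/
/-- The six positive roots of `G₂` as coefficient vectors over the simple
roots `(α₁, α₂)` (`α₁` short, `α₂` long). -/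
def G2PosRoots : Finset (Fin 2 → ℤ) :=
  {![1,0], ![0,1], ![1,1], ![2,1], ![3,1], ![3,2]}

/-- All twelve roots of `G₂`. -/
def G2Roots : Finset (Fin 2 → ℤ) :=
  G2PosRoots ∪ G2PosRoots.image (fun v => -v)

/-- The marks of the extended Dynkin diagram of `G₂`: `(b₀, b₁, b₂) = (1, 3, 2)`. -/
def G2Marks : Fin 3 → ℕ := ![1, 3, 2]

/-- `G2Count p a i` is the number of roots `α` of `G₂` with
`c₁·a₁ + c₂·a₂ ≡ i (mod p)`, where `(c₁, c₂)` is the coefficient vector of `α`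
and `(a₀, a₁, a₂)` is a Kac tuple. -/
def G2Count (p : ℕ) (a : Fin 3 → ℕ) (i : ZMod p) : ℕ :=
  (G2Roots.filter (fun v => ((∑ j : Fin 2, v j * (a j.succ : ℤ) : ℤ) : ZMod p) = i)).card

set_option maxHeartbeats 4000000 in
/-- Classification of balanced nontrivial Kac tuples for `G₂` in characteristic `p ≥ 5`. -/
theorem g2_balanced_classification (p : ℕ) (hp : p.Prime) (hp5 : 5 ≤ p)
    (a : Fin 3 → ℕ) (ha : ∑ i, G2Marks i * a i = p) :
    ((∀ i j : ZMod p, i ≠ 0 → j ≠ 0 → G2Count p a i = G2Count p a j) ∧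
      (∃ i : ZMod p, i ≠ 0 ∧ G2Count p a i ≠ 0)) ↔
    ((p = 7 ∧ a = ![2,1,1]) ∨ (p = 13 ∧ a = ![6,1,2]) ∨ (p = 13 ∧ a = ![1,2,3])) := by
  constructor
  · intro H
    obtain ⟨hbal, i0, hi0, hc⟩ := id H
    haveI : NeZero p := ⟨by omega⟩
    have hsum : ∑ i : ZMod p, G2Count p a i = 12 := by
      have h := Finset.card_eq_sum_card_fiberwise (s := G2Roots) (t := Finset.univ)
        (f := fun v => ((∑ j : Fin 2, v j * (a j.succ : ℤ) : ℤ) : ZMod p))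
        (fun v _ => Finset.mem_univ _)
      have hcard : G2Roots.card = 12 := by decide
      rw [hcard] at h
      simpa [G2Count] using h.symm
    have herase : ∑ i ∈ Finset.univ.erase (0 : ZMod p), G2Count p a i
        = (p - 1) * G2Count p a i0 := by
      rw [Finset.sum_congr rfl (fun j hj => hbal j i0 (Finset.ne_of_mem_erase hj) hi0),
        Finset.sum_const, Finset.card_erase_of_mem (Finset.mem_univ _),
        Finset.card_univ, ZMod.card, smul_eq_mul]
    have hle : (p - 1) * G2Count p a i0 ≤ 12 := by
      rw [← herase, ← hsum]
      exact Finset.sum_le_sum_of_subset (Finset.subset_univ _)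
    have hc1 : 1 ≤ G2Count p a i0 := Nat.one_le_iff_ne_zero.mpr hc
    have hp13 : p ≤ 13 := by
      have : p - 1 ≤ 12 := le_trans (by nlinarith) hle
      omega
    obtain ⟨x, y, z, rfl⟩ : ∃ x y z, a = ![x, y, z] :=
      ⟨a 0, a 1, a 2, by funext i; fin_cases i <;> rfl⟩
    have hE : x + 3 * y + 2 * z = p := by
      simp [Fin.sum_univ_three, G2Marks] at ha; omega
    have hx : x ≤ 13 := by omega
    have hy : y ≤ 4 := by omega
    have hz : z ≤ 6 := by omega
    have hps : p = 5 ∨ p = 7 ∨ p = 11 ∨ p = 13 := by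
      interval_cases p <;> revert hp <;> decide
    rcases hps with rfl | rfl | rfl | rfl <;>
      (interval_cases x <;> interval_cases y <;> interval_cases z <;>
        first
          | omega
          | exact Or.inl ⟨rfl, rfl⟩
          | exact Or.inr (Or.inl ⟨rfl, rfl⟩)
          | exact Or.inr (Or.inr ⟨rfl, rfl⟩)
          | exact absurd H (by decide))
  · rintro (⟨rfl, rfl⟩ | ⟨rfl, rfl⟩ | ⟨rfl, rfl⟩) <;> exact ⟨by decide, by decide⟩
end

section
/- For the root system of type E6: for every nonempty subset J of {0,1,…,6} inducing a connected subgraph of the extended Dynkin diagram, the vector φ(J) is a positive root of E6; and the map φ, from the set of all such subsets J to the set of positive roots, is injective. -/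
/-- The Cartan matrix of type `E₆` in Bourbaki's numbering. -/
def E6Cartan : Matrix (Fin 6) (Fin 6) ℤ :=
  !![2,0,-1,0,0,0;
     0,2,0,-1,0,0;
     -1,0,2,-1,0,0;
     0,-1,-1,2,-1,0;
     0,0,0,-1,2,-1;
     0,0,0,0,-1,2]

/-- The 36 positive roots of `E₆`: roots (coefficient vectors `v` with
`vᵀ C v = 2`) all of whose coordinates are nonnegative. -/
def E6PosRoots : Set (Fin 6 → ℤ) :=
  {v | (∑ i, ∑ j, v i * E6Cartan i j * v j = 2) ∧ ∀ j, 0 ≤ v j}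

/-- The highest root `α̃₀ = α₁ + 2α₂ + 2α₃ + 3α₄ + 2α₅ + α₆` of `E₆`. -/
def E6Highest : Fin 6 → ℤ := ![1, 2, 2, 3, 2, 1]

/-- The simple root `αᵢ` (for `1 ≤ i ≤ 6`) as a coefficient vector; node `0`
(the affine node) is sent to `0`. -/
def E6SimpleRoot (i : Fin 7) : Fin 6 → ℤ :=
  fun j => if (i : ℕ) = (j : ℕ) + 1 then 1 else 0

/-- The extended Dynkin diagram of `E₆`: vertex set `{0, 1, …, 6}`, edges
`1–3, 3–4, 4–5, 5–6, 2–4, 0–2`. -/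
def E6ExtGraph : SimpleGraph (Fin 7) :=
  SimpleGraph.fromEdgeSet {s(1,3), s(3,4), s(4,5), s(5,6), s(2,4), s(0,2)}

/-- The map `φ` from connected subsets of the extended Dynkin diagram to roots:
`φ(J) = Σ_{i∈J} αᵢ` if `0 ∉ J`, and `φ(J) = α̃₀ − Σ_{i∈J, i≠0} αᵢ` if `0 ∈ J`. -/
def E6phi (J : Finset (Fin 7)) : Fin 6 → ℤ :=
  if 0 ∈ J then E6Highest - ∑ i ∈ J.erase 0, E6SimpleRoot i
  else ∑ i ∈ J, E6SimpleRoot i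

instance : DecidableRel E6ExtGraph.Adj := fun a b =>
  decidable_of_iff (s(a,b) ∈ ({s(1,3), s(3,4), s(4,5), s(5,6), s(2,4), s(0,2)} : Finset (Sym2 (Fin 7))) ∧ a ≠ b)
    (by simp [E6ExtGraph, SimpleGraph.fromEdgeSet_adj, and_comm])

instance : DecidablePred (· ∈ E6PosRoots) := fun v =>
  decidable_of_iff ((∑ i, ∑ j, v i * E6Cartan i j * v j = 2) ∧ ∀ j, 0 ≤ v j) Iff.rfl

instance (priority := 2000) myConnDec {V : Type*} [Fintype V] [DecidableEq V]
    (G : SimpleGraph V) [DecidableRel G.Adj] : Decidable G.Connected :=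
  decidable_of_iff (G.Preconnected ∧ (Finset.univ : Finset V).Nonempty)
    ((and_congr_right fun _ => Finset.univ_nonempty_iff).trans (SimpleGraph.connected_iff G).symm)

set_option maxRecDepth 1000000 in
set_option maxHeartbeats 10000000 in
/-- For every nonempty subset `J` of `{0,…,6}` inducing a connected subgraph of the
extended Dynkin diagram of `E₆`, `φ(J)` is a positive root, and `φ` is injective on
such subsets. -/
theorem e6_phi_into_positive_roots_injective :
    (∀ J : Finset (Fin 7), J.Nonempty →
      (E6ExtGraph.induce (J : Set (Fin 7))).Connected → E6phi J ∈ E6PosRoots) ∧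
    (∀ J J' : Finset (Fin 7), J.Nonempty →
      (E6ExtGraph.induce (J : Set (Fin 7))).Connected → J'.Nonempty →
      (E6ExtGraph.induce (J' : Set (Fin 7))).Connected →
      E6phi J = E6phi J' → J = J') := by
  decide
end

section
/- For the root system of type E6, the map φ is a bijection from the set of nonempty subsets of {0,1,…,6} inducing connected subgraphs of the extended Dynkin diagram onto the set of positive roots of E6; in particular, the extended Dynkin diagram of E6 has exactly 36 nonempty connected induced subgraphs. -/
/-! ### Auxiliary decidability instances and computations -/

instance inst_s10 : DecidableRel E6ExtGraph.Adj := fun a b =>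
  decidable_of_iff
    (s(a,b) ∈ ({s(1,3), s(3,4), s(4,5), s(5,6), s(2,4), s(0,2)} : Finset (Sym2 (Fin 7)))
      ∧ a ≠ b) (by
    constructor
    · rintro ⟨h, hne⟩; exact ⟨by simpa using h, hne⟩
    · rintro ⟨h, hne⟩; exact ⟨by simpa using h, hne⟩)

instance e6AuxInstNE (s : Set (Fin 7)) [DecidablePred (· ∈ s)] : Decidable (Nonempty s) :=
  decidable_of_iff s.toFinset.Nonempty (by rw [Set.toFinset_nonempty, Set.nonempty_coe_sort])

instance e6AuxInstConn (H : SimpleGraph (Fin 7)) [DecidableRel H.Adj] (s : Set (Fin 7))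
    [DecidablePred (· ∈ s)] : Decidable (H.induce s).Connected :=
  decidable_of_iff ((H.induce s).Preconnected ∧ Nonempty s) (H.induce s).connected_iff.symm

/-- The predicate "nonempty and connected". -/
def E6P (J : Finset (Fin 7)) : Prop :=
  J.Nonempty ∧ (E6ExtGraph.induce (J : Set (Fin 7))).Connected

instance : DecidablePred E6P := fun _ => inferInstanceAs (Decidable (_ ∧ _))

/-- The 36 nonempty connected subsets, listed explicitly. -/
def E6T : Finset (Finset (Fin 7)) :=
  {{0}, {1}, {2}, {3}, {4}, {5}, {6}, {0,2}, {1,3}, {2,4}, {3,4}, {4,5}, {5,6},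
   {0,2,4}, {1,3,4}, {2,3,4}, {2,4,5}, {3,4,5}, {4,5,6}, {0,2,3,4}, {0,2,4,5},
   {1,2,3,4}, {1,3,4,5}, {2,3,4,5}, {2,4,5,6}, {3,4,5,6}, {0,1,2,3,4},
   {0,2,3,4,5}, {0,2,4,5,6}, {1,2,3,4,5}, {1,3,4,5,6}, {2,3,4,5,6},
   {0,1,2,3,4,5}, {0,2,3,4,5,6}, {1,2,3,4,5,6}, {0,1,2,3,4,5,6}}

set_option maxHeartbeats 4000000 in
set_option maxRecDepth 20000 in
lemma E6T_eq : Finset.univ.filter E6P = E6T := by decide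

def E6Box : Finset (Fin 6 → Fin 4) :=
  Finset.univ.filter (fun w => (w 0 : ℕ) ≤ 1 ∧ (w 5 : ℕ) ≤ 1 ∧ (w 1 : ℕ) ≤ 2 ∧ (w 2 : ℕ) ≤ 2
    ∧ (w 4 : ℕ) ≤ 2 ∧ ∑ i, ∑ j, ((w i : ℕ) : ℤ) * E6Cartan i j * ((w j : ℕ) : ℤ) = 2)

set_option maxHeartbeats 4000000 in
set_option maxRecDepth 20000 in
lemma E6_image_eq : E6T.image E6phi = E6Box.image (fun w i => ((w i : ℕ) : ℤ)) := by decide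

set_option maxHeartbeats 4000000 in
set_option maxRecDepth 20000 in
lemma E6_inj : ∀ J ∈ E6T, ∀ K ∈ E6T, E6phi J = E6phi K → J = K := by decide

lemma E6T_card : E6T.card = 36 := by decide

lemma vec6_0 {α : Type*} (a b c d e f : α) : ![a,b,c,d,e,f] 0 = a := rfl
lemma vec6_1 {α : Type*} (a b c d e f : α) : ![a,b,c,d,e,f] 1 = b := rfl
lemma vec6_2 {α : Type*} (a b c d e f : α) : ![a,b,c,d,e,f] 2 = c := rfl
lemma vec6_3 {α : Type*} (a b c d e f : α) : ![a,b,c,d,e,f] 3 = d := rfl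
lemma vec6_4 {α : Type*} (a b c d e f : α) : ![a,b,c,d,e,f] 4 = e := rfl
lemma vec6_5 {α : Type*} (a b c d e f : α) : ![a,b,c,d,e,f] 5 = f := rfl

set_option maxHeartbeats 1000000 in
lemma E6_bounds (v : Fin 6 → ℤ) (h2 : ∑ i, ∑ j, v i * E6Cartan i j * v j = 2)
    (hn : ∀ j, 0 ≤ v j) :
    v 0 ≤ 1 ∧ v 1 ≤ 2 ∧ v 2 ≤ 2 ∧ v 3 ≤ 3 ∧ v 4 ≤ 2 ∧ v 5 ≤ 1 := by
  simp only [Fin.sum_univ_six, E6Cartan, Matrix.of_apply,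
    vec6_0, vec6_1, vec6_2, vec6_3, vec6_4, vec6_5] at h2
  ring_nf at h2
  have h0 := hn 0; have h1 := hn 1; have hh2 := hn 2; have h3 := hn 3
  have h4 := hn 4; have h5 := hn 5
  refine ⟨?_, ?_, ?_, ?_, ?_, ?_⟩
  · nlinarith [sq_nonneg (5*v 0-4*v 2), sq_nonneg (2*v 1-v 3), sq_nonneg (6*v 2-5*v 3),
      sq_nonneg (2*v 3-3*v 4), sq_nonneg (v 4-2*v 5)]
  · nlinarith [sq_nonneg (2*v 0-v 2), sq_nonneg (3*v 1-2*v 3), sq_nonneg (3*v 2-2*v 3),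
      sq_nonneg (2*v 3-3*v 4), sq_nonneg (v 4-2*v 5)]
  · nlinarith [sq_nonneg (2*v 0-v 2), sq_nonneg (2*v 1-v 3), sq_nonneg (6*v 2-5*v 3),
      sq_nonneg (2*v 3-3*v 4), sq_nonneg (v 4-2*v 5)]
  · nlinarith [sq_nonneg (2*v 0-v 2), sq_nonneg (2*v 1-v 3), sq_nonneg (3*v 2-2*v 3),
      sq_nonneg (2*v 3-3*v 4), sq_nonneg (v 4-2*v 5)]
  · nlinarith [sq_nonneg (2*v 0-v 2), sq_nonneg (2*v 1-v 3), sq_nonneg (3*v 2-2*v 3),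
      sq_nonneg (5*v 3-6*v 4), sq_nonneg (v 4-2*v 5)]
  · nlinarith [sq_nonneg (2*v 0-v 2), sq_nonneg (2*v 1-v 3), sq_nonneg (3*v 2-2*v 3),
      sq_nonneg (5*v 3-6*v 4), sq_nonneg (4*v 4-5*v 5)]

lemma E6_setEq :
    {J : Finset (Fin 7) | J.Nonempty ∧ (E6ExtGraph.induce (J : Set (Fin 7))).Connected}
      = (E6T : Set (Finset (Fin 7))) := by
  ext J
  have : E6P J ↔ J ∈ E6T := by
    rw [← E6T_eq]
    simp [Finset.mem_filter]
  simpa [Set.mem_setOf_eq, E6P] using this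

/-- `φ` is a bijection from the nonempty connected induced subsets of the extended
Dynkin diagram of `E₆` onto the positive roots of `E₆`; in particular there are
exactly 36 such subsets. -/
theorem e6_phi_bijective :
    Set.BijOn E6phi
      {J : Finset (Fin 7) | J.Nonempty ∧ (E6ExtGraph.induce (J : Set (Fin 7))).Connected}
      E6PosRoots ∧
    {J : Finset (Fin 7) | J.Nonempty ∧
      (E6ExtGraph.induce (J : Set (Fin 7))).Connected}.ncard = 36 := by
  constructor
  · rw [E6_setEq]
    refine ⟨?_, ?_, ?_⟩
    · -- MapsTo
      intro J hJ
      have hJ' : J ∈ E6T := hJ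
      have hmem : E6phi J ∈ E6Box.image (fun w i => ((w i : ℕ) : ℤ)) := by
        rw [← E6_image_eq]; exact Finset.mem_image_of_mem _ hJ'
      obtain ⟨w, hw, hwe⟩ := Finset.mem_image.1 hmem
      have hw2 := (Finset.mem_filter.1 hw).2
      constructor
      · rw [← hwe]; exact hw2.2.2.2.2.2
      · intro j; rw [← hwe]; exact Int.natCast_nonneg _
    · -- InjOn
      intro J hJ K hK h
      exact E6_inj J hJ K hK h
    · -- SurjOn
      intro v hv
      obtain ⟨h2, hn⟩ := hv
      obtain ⟨hb0, hb1, hb2, hb3, hb4, hb5⟩ := E6_bounds v h2 hn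
      have hlt : ∀ i, (v i).toNat < 4 := by
        intro i; have := hn i
        fin_cases i <;> simp <;> omega
      set w : Fin 6 → Fin 4 := fun i => ⟨(v i).toNat, hlt i⟩ with hw
      have hvw : v = fun i => ((w i : ℕ) : ℤ) := by
        funext i
        simp [hw, Int.toNat_of_nonneg (hn i)]
      have hc : ∀ i, ((w i : ℕ) : ℤ) = v i := fun i => (congrFun hvw i).symm
      have hwbox : w ∈ E6Box := by
        refine Finset.mem_filter.2 ⟨Finset.mem_univ _, ?_, ?_, ?_, ?_, ?_, ?_⟩
        · show (v 0).toNat ≤ 1; have := hn 0; omega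
        · show (v 5).toNat ≤ 1; have := hn 5; omega
        · show (v 1).toNat ≤ 2; have := hn 1; omega
        · show (v 2).toNat ≤ 2; have := hn 2; omega
        · show (v 4).toNat ≤ 2; have := hn 4; omega
        · simp only [hc]
          exact h2
      have hvmem : v ∈ E6Box.image (fun w i => ((w i : ℕ) : ℤ)) :=
        Finset.mem_image.2 ⟨w, hwbox, hvw.symm⟩
      rw [← E6_image_eq] at hvmem
      obtain ⟨J, hJ, hJe⟩ := Finset.mem_image.1 hvmem
      exact ⟨J, hJ, hJe⟩
  · rw [E6_setEq, Set.ncard_coe_finset]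
    exact E6T_card
end

section
/- Let the type X be one of G2, F4, E7, E8, with rank l equal to 2, 4, 7, 8 and Coxeter number h equal to 6, 12, 18, 30 respectively. For nonempty subsets J and J′ of {0,1,…,l} inducing connected subgraphs of the extended Dynkin diagram of type X, if 0 ∈ J and 0 ∉ J′, then the height (sum of coefficients) of φ(J) is at least h − l − 1, the height of φ(J′) is at most l, and h − l − 1 > l; consequently φ(J) ≠ φ(J′). -/
/-! Height separation for the map `φ` on connected subsets of the extended Dynkin
diagrams of types `G₂`, `F₄`, `E₇`, `E₈` (rank `l` = 2, 4, 7, 8 and Coxeter number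
`h` = 6, 12, 18, 30 respectively). -/

/-- The simple root `αᵢ` (for `1 ≤ i ≤ l`) as a coefficient vector; node `0`
(the affine node) is sent to `0`. -/
def simpleRoot (l : ℕ) (i : Fin (l + 1)) : Fin l → ℤ :=
  fun j => if (i : ℕ) = (j : ℕ) + 1 then 1 else 0

/-- The map `φ`: `φ(J) = Σ_{i∈J} αᵢ` if `0 ∉ J`, and
`φ(J) = α̃₀ − Σ_{i∈J, i≠0} αᵢ` if `0 ∈ J`, where `hr` is the highest root. -/
def phiMap (l : ℕ) (hr : Fin l → ℤ) (J : Finset (Fin (l + 1))) : Fin l → ℤ :=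
  if 0 ∈ J then hr - ∑ i ∈ J.erase 0, simpleRoot l i
  else ∑ i ∈ J, simpleRoot l i

/-- The height of a vector: the sum of its coefficients. -/
def height (l : ℕ) (v : Fin l → ℤ) : ℤ := ∑ j, v j

def G2Highest : Fin 2 → ℤ := ![3, 2]
def G2ExtGraph : SimpleGraph (Fin 3) :=
  SimpleGraph.fromEdgeSet {s(1,2), s(2,0)}

def F4Highest : Fin 4 → ℤ := ![2, 3, 4, 2]
def F4ExtGraph : SimpleGraph (Fin 5) :=
  SimpleGraph.fromEdgeSet {s(0,1), s(1,2), s(2,3), s(3,4)}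

def E7Highest : Fin 7 → ℤ := ![2, 2, 3, 4, 3, 2, 1]
def E7ExtGraph : SimpleGraph (Fin 8) :=
  SimpleGraph.fromEdgeSet {s(0,1), s(1,3), s(3,4), s(4,5), s(5,6), s(6,7), s(2,4)}

def E8Highest : Fin 8 → ℤ := ![2, 3, 4, 6, 5, 4, 3, 2]
def E8ExtGraph : SimpleGraph (Fin 9) :=
  SimpleGraph.fromEdgeSet {s(1,3), s(3,4), s(4,5), s(5,6), s(6,7), s(7,8), s(2,4), s(0,8)}

/-! Only heights matter: every simple root has height 1 and the highest root has height `h - 1`,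
so `φ(J)` has height `h - 1 - |J ∖ {0}| ≥ h - 1 - l`, while `φ(J′)` has height `|J′| ≤ l`. -/

lemma simpleRoot_succ (l : ℕ) (j : Fin l) : simpleRoot l j.succ = Pi.single j 1 := by
  ext k
  simp only [simpleRoot, Fin.val_succ, add_left_inj, Pi.single_apply, Fin.val_inj, eq_comm]

lemma height_sum {ι : Type*} (l : ℕ) (s : Finset ι) (f : ι → Fin l → ℤ) :
    height l (∑ i ∈ s, f i) = ∑ i ∈ s, height l (f i) := by
  simp only [height, Finset.sum_apply]
  exact Finset.sum_comm

lemma height_sub (l : ℕ) (a b : Fin l → ℤ) : height l (a - b) = height l a - height l b := by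
  simp only [height, Pi.sub_apply, Finset.sum_sub_distrib]

lemma height_simpleRoot {l : ℕ} {i : Fin (l + 1)} (hi : i ≠ 0) : height l (simpleRoot l i) = 1 := by
  obtain ⟨j, rfl⟩ := Fin.exists_succ_eq.mpr hi
  simp [height, simpleRoot_succ]

lemma height_sum_simpleRoot {l : ℕ} {s : Finset (Fin (l + 1))} (hs : 0 ∉ s) :
    height l (∑ i ∈ s, simpleRoot l i) = s.card := by
  rw [height_sum, Finset.sum_congr rfl fun i hi => height_simpleRoot (ne_of_mem_of_not_mem hi hs)]
  simp

lemma card_le_of_zero_notMem {l : ℕ} {s : Finset (Fin (l + 1))} (hs : 0 ∉ s) : s.card ≤ l := by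
  simpa using Finset.card_le_card (Finset.subset_erase.mpr ⟨Finset.subset_univ s, hs⟩)

lemma height_phiMap_of_zero_mem {l : ℕ} (hr : Fin l → ℤ) {J : Finset (Fin (l + 1))} (h0 : 0 ∈ J) :
    height l (phiMap l hr J) = height l hr - (J.erase 0).card := by
  rw [phiMap, if_pos h0, height_sub, height_sum_simpleRoot (Finset.notMem_erase 0 J)]

lemma height_phiMap_of_zero_notMem {l : ℕ} (hr : Fin l → ℤ) {J : Finset (Fin (l + 1))}
    (h0 : 0 ∉ J) : height l (phiMap l hr J) = J.card := by
  rw [phiMap, if_neg h0, height_sum_simpleRoot h0]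

lemma height_sub_le_height_phiMap {l : ℕ} (hr : Fin l → ℤ) {J : Finset (Fin (l + 1))}
    (h0 : 0 ∈ J) : height l hr - l ≤ height l (phiMap l hr J) := by
  have := card_le_of_zero_notMem (Finset.notMem_erase 0 J)
  rw [height_phiMap_of_zero_mem hr h0]
  omega

lemma height_phiMap_le {l : ℕ} (hr : Fin l → ℤ) {J : Finset (Fin (l + 1))} (h0 : 0 ∉ J) :
    height l (phiMap l hr J) ≤ l := by
  rw [height_phiMap_of_zero_notMem hr h0]
  exact_mod_cast card_le_of_zero_notMem h0

lemma phiMap_ne_of_lt_height {l : ℕ} {hr : Fin l → ℤ} (hgap : 2 * l < height l hr)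
    {J J' : Finset (Fin (l + 1))} (h0 : 0 ∈ J) (h0' : 0 ∉ J') : phiMap l hr J ≠ phiMap l hr J' := by
  intro heq
  have := height_sub_le_height_phiMap hr h0
  have := height_phiMap_le hr h0'
  rw [heq] at *
  omega

lemma phiMap_height_separation {l : ℕ} {hr : Fin l → ℤ} {h : ℤ} (hcox : height l hr = h - 1)
    (hgap : (l : ℤ) < h - l - 1) {J J' : Finset (Fin (l + 1))} (h0 : 0 ∈ J) (h0' : 0 ∉ J') :
    h - l - 1 ≤ height l (phiMap l hr J) ∧ height l (phiMap l hr J') ≤ l ∧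
      (l : ℤ) < h - l - 1 ∧ phiMap l hr J ≠ phiMap l hr J' :=
  ⟨by linarith [height_sub_le_height_phiMap hr h0], height_phiMap_le hr h0', hgap,
    phiMap_ne_of_lt_height (by linarith) h0 h0'⟩

/-- In types `G₂`, `F₄`, `E₇`, `E₈`: for nonempty connected induced subsets `J`, `J′`
of the extended Dynkin diagram with `0 ∈ J` and `0 ∉ J′`, the height of `φ(J)` is at
least `h − l − 1`, the height of `φ(J′)` is at most `l`, `h − l − 1 > l`, and hence
`φ(J) ≠ φ(J′)`. -/
theorem phi_height_separation :
    (∀ J J' : Finset (Fin 3), J.Nonempty →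
      (G2ExtGraph.induce (J : Set (Fin 3))).Connected → J'.Nonempty →
      (G2ExtGraph.induce (J' : Set (Fin 3))).Connected → 0 ∈ J → 0 ∉ J' →
      (6 - 2 - 1 : ℤ) ≤ height 2 (phiMap 2 G2Highest J) ∧
      height 2 (phiMap 2 G2Highest J') ≤ (2 : ℤ) ∧
      (2 : ℤ) < 6 - 2 - 1 ∧ phiMap 2 G2Highest J ≠ phiMap 2 G2Highest J') ∧
    (∀ J J' : Finset (Fin 5), J.Nonempty →
      (F4ExtGraph.induce (J : Set (Fin 5))).Connected → J'.Nonempty →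
      (F4ExtGraph.induce (J' : Set (Fin 5))).Connected → 0 ∈ J → 0 ∉ J' →
      (12 - 4 - 1 : ℤ) ≤ height 4 (phiMap 4 F4Highest J) ∧
      height 4 (phiMap 4 F4Highest J') ≤ (4 : ℤ) ∧
      (4 : ℤ) < 12 - 4 - 1 ∧ phiMap 4 F4Highest J ≠ phiMap 4 F4Highest J') ∧
    (∀ J J' : Finset (Fin 8), J.Nonempty →
      (E7ExtGraph.induce (J : Set (Fin 8))).Connected → J'.Nonempty →
      (E7ExtGraph.induce (J' : Set (Fin 8))).Connected → 0 ∈ J → 0 ∉ J' →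
      (18 - 7 - 1 : ℤ) ≤ height 7 (phiMap 7 E7Highest J) ∧
      height 7 (phiMap 7 E7Highest J') ≤ (7 : ℤ) ∧
      (7 : ℤ) < 18 - 7 - 1 ∧ phiMap 7 E7Highest J ≠ phiMap 7 E7Highest J') ∧
    (∀ J J' : Finset (Fin 9), J.Nonempty →
      (E8ExtGraph.induce (J : Set (Fin 9))).Connected → J'.Nonempty →
      (E8ExtGraph.induce (J' : Set (Fin 9))).Connected → 0 ∈ J → 0 ∉ J' →
      (30 - 8 - 1 : ℤ) ≤ height 8 (phiMap 8 E8Highest J) ∧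
      height 8 (phiMap 8 E8Highest J') ≤ (8 : ℤ) ∧
      (8 : ℤ) < 30 - 8 - 1 ∧ phiMap 8 E8Highest J ≠ phiMap 8 E8Highest J') := by
  refine ⟨fun J J' _ _ _ _ h0 h0' => ?_, fun J J' _ _ _ _ h0 h0' => ?_,
    fun J J' _ _ _ _ h0 h0' => ?_, fun J J' _ _ _ _ h0 h0' => ?_⟩
  · exact_mod_cast phiMap_height_separation (h := 6) (by decide) (by norm_num) h0 h0'
  · exact_mod_cast phiMap_height_separation (h := 12) (by decide) (by norm_num) h0 h0'
  · exact_mod_cast phiMap_height_separation (h := 18) (by decide) (by norm_num) h0 h0'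
  · exact_mod_cast phiMap_height_separation (h := 30) (by decide) (by norm_num) h0 h0'
end

section
/- In the coweight space of E8, let β1, β2, β3, β4 be the roots with coefficient vectors (1,2,3,4,3,2,1,0), (2,2,3,4,3,2,1,1), (2,2,4,5,4,3,2,1) and (2,3,4,6,5,4,3,1) respectively (β4 = α̃0 − α8 for the highest root α̃0). Then the composition S_{β4,1} ∘ S_{β3,1} ∘ S_{β2,1} ∘ S_{β1,1} maps the point (2/5)ω̌3 to the point (1/5)ω̌2 + (1/5)ω̌8. (This shows that in type E8 in characteristic 5, the element 2h, for h the balanced toral element with Kac coordinates (1,0,0,1,0,0,0,0,0), is conjugate under the extended affine Weyl group to the balanced toral element with Kac coordinates (0,0,1,0,0,0,0,0,1).) -/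
/-- The Cartan matrix of type `E₈` in Bourbaki's numbering, over `ℚ`. -/
def E8CartanQ : Matrix (Fin 8) (Fin 8) ℚ :=
  !![2,0,-1,0,0,0,0,0;
     0,2,0,-1,0,0,0,0;
     -1,0,2,-1,0,0,0,0;
     0,-1,-1,2,-1,0,0,0;
     0,0,0,-1,2,-1,0,0;
     0,0,0,0,-1,2,-1,0;
     0,0,0,0,0,-1,2,-1;
     0,0,0,0,0,0,-1,2]

/-- The pairing `⟨β, x⟩ = Σᵢ cᵢ xᵢ` of a root with coefficient vector `c` against a
point `x` of the coweight space (coordinates in the basis of fundamental coweights). -/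
def E8pair (c x : Fin 8 → ℚ) : ℚ := ∑ i, c i * x i

/-- The affine reflection `S_{β,n}(x) = x + (n − ⟨β,x⟩)·β^∨` about the hyperplane
`⟨β,x⟩ = n`, where the coroot `β^∨` has `ω̌`-coordinates `C·c`. -/
def E8refl (c : Fin 8 → ℚ) (n : ℚ) (x : Fin 8 → ℚ) : Fin 8 → ℚ :=
  x + (n - E8pair c x) • E8CartanQ.mulVec c

section E8Aux
variable {α : Type*} (a0 a1 a2 a3 a4 a5 a6 a7 : α)
lemma e8v0 : (![a0,a1,a2,a3,a4,a5,a6,a7]) 0 = a0 := rfl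
lemma e8v1 : (![a0,a1,a2,a3,a4,a5,a6,a7]) 1 = a1 := rfl
lemma e8v2 : (![a0,a1,a2,a3,a4,a5,a6,a7]) 2 = a2 := rfl
lemma e8v3 : (![a0,a1,a2,a3,a4,a5,a6,a7]) 3 = a3 := rfl
lemma e8v4 : (![a0,a1,a2,a3,a4,a5,a6,a7]) 4 = a4 := rfl
lemma e8v5 : (![a0,a1,a2,a3,a4,a5,a6,a7]) 5 = a5 := rfl
lemma e8v6 : (![a0,a1,a2,a3,a4,a5,a6,a7]) 6 = a6 := rfl
lemma e8v7 : (![a0,a1,a2,a3,a4,a5,a6,a7]) 7 = a7 := rfl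
end E8Aux

set_option maxHeartbeats 1600000 in
/-- In type `E₈`: the composition `S_{β₄,1} ∘ S_{β₃,1} ∘ S_{β₂,1} ∘ S_{β₁,1}`, for the
roots `β₁ = α₁+2α₂+3α₃+4α₄+3α₅+2α₆+α₇`, `β₂ = 2α₁+2α₂+3α₃+4α₄+3α₅+2α₆+α₇+α₈`,
`β₃ = 2α₁+2α₂+4α₃+5α₄+4α₅+3α₆+2α₇+α₈` and `β₄ = α̃₀ − α₈`, maps `(2/5)ω̌₃` to
`(1/5)ω̌₂ + (1/5)ω̌₈`. -/
theorem e8_char5_scalar_multiple_conjugation :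
    E8refl ![2,3,4,6,5,4,3,1] 1
      (E8refl ![2,2,4,5,4,3,2,1] 1
        (E8refl ![2,2,3,4,3,2,1,1] 1
          (E8refl ![1,2,3,4,3,2,1,0] 1
            ((2/5 : ℚ) • (Pi.single 2 1 : Fin 8 → ℚ))))) =
    (1/5 : ℚ) • (Pi.single 1 1 : Fin 8 → ℚ) + (1/5 : ℚ) • (Pi.single 7 1 : Fin 8 → ℚ) := by
  have h0 : ((2/5 : ℚ) • (Pi.single 2 1 : Fin 8 → ℚ)) = ![0,0,2/5,0,0,0,0,0] := by
    funext i; fin_cases i <;> simp [Pi.single_apply, e8v0, e8v1, e8v2, e8v3, e8v4, e8v5, e8v6, e8v7]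
  have h1 : E8refl ![1,2,3,4,3,2,1,0] 1 ![0,0,2/5,0,0,0,0,0] = ![1/5,0,1/5,0,0,0,0,1/5] := by
    funext i; fin_cases i <;>
      simp [E8refl, E8pair, E8CartanQ, Matrix.mulVec, dotProduct, Fin.sum_univ_eight,
        e8v0, e8v1, e8v2, e8v3, e8v4, e8v5, e8v6, e8v7] <;> norm_num
  have h2 : E8refl ![2,2,3,4,3,2,1,1] 1 ![1/5,0,1/5,0,0,0,0,1/5] = ![0,0,1/5,0,0,0,1/5,0] := by
    funext i; fin_cases i <;>
      simp [E8refl, E8pair, E8CartanQ, Matrix.mulVec, dotProduct, Fin.sum_univ_eight,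
        e8v0, e8v1, e8v2, e8v3, e8v4, e8v5, e8v6, e8v7] <;> norm_num
  have h3 : E8refl ![2,2,4,5,4,3,2,1] 1 ![0,0,1/5,0,0,0,1/5,0] = ![0,1/5,0,0,0,0,1/5,0] := by
    funext i; fin_cases i <;>
      simp [E8refl, E8pair, E8CartanQ, Matrix.mulVec, dotProduct, Fin.sum_univ_eight,
        e8v0, e8v1, e8v2, e8v3, e8v4, e8v5, e8v6, e8v7] <;> norm_num
  have h4 : E8refl ![2,3,4,6,5,4,3,1] 1 ![0,1/5,0,0,0,0,1/5,0] = ![0,1/5,0,0,0,0,0,1/5] := by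
    funext i; fin_cases i <;>
      simp [E8refl, E8pair, E8CartanQ, Matrix.mulVec, dotProduct, Fin.sum_univ_eight,
        e8v0, e8v1, e8v2, e8v3, e8v4, e8v5, e8v6, e8v7] <;> norm_num
  rw [h0, h1, h2, h3, h4]
  funext i; fin_cases i <;>
    simp [Pi.single_apply, e8v0, e8v1, e8v2, e8v3, e8v4, e8v5, e8v6, e8v7]
end
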